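/- Let p be a prime, X a finite connected undirected graph, and α a Z_p-valued voltage assignment on X; for n ≥ 0 let α_n be α reduced modulo p^n and X_n = X(Z/p^nZ, α_n). Assume there exists an integer m_0 such that for all n ≥ m_0 the number of connected components of X_n equals that of X_{m_0}. Then for every connected component 𝒢_{m_0} of X_{m_0} and every m ≥ m_0 there exists a unique connected subgraph 𝒢_m of X_m such that the sequence 𝒢_{m_0} ← 𝒢_{m_0+1} ← 𝒢_{m_0+2} ← ⋯ (with the maps induced by the natural projections X_{m+1} → X_m) is a Z_p-tower of graph coverings. -/

import Mathlib

/-! # Multigraphs, coverings, voltage assignments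

Directed multigraphs (with loops and multiple edges allowed), undirected multigraphs
(encoded à la Serre, as directed graphs with an edge-inversion), morphisms, coverings,
sheet numbers, deck transformation groups, Galois coverings, voltage assignments and
their derived graphs, connectedness, connected components, directed cycle graphs,
abstract (tectonic) craters and (tectonic) `l`-volcanoes. -/

/-- A directed multigraph. -/
structure Digraph' : Type 1 where
  V : Type
  E : Type
  src : E → V
  tgt : E → V

namespace Digraph'

variable (X : Digraph')

/-- Two vertices are adjacent if some edge goes from the first to the second. -/
def Adj (v w : X.V) : Prop := ∃ e : X.E, X.src e = v ∧ X.tgt e = w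

/-- Two vertices lie in the same connected component (of the underlying
undirected graph). -/
def Reach (v w : X.V) : Prop := Relation.EqvGen X.Adj v w

/-- A graph is connected if any two vertices lie in the same connected component. -/
def Connected : Prop := ∀ v w : X.V, X.Reach v w

/-- The set of vertices of the connected component containing `v`. -/
def ComponentSet (v : X.V) : Set X.V := {w | X.Reach v w}

/-- The number of connected components. -/
noncomputable def NumComponents : ℕ := Nat.card (Quot X.Adj)

/-- The subgraph generated by a set `S` of vertices: its edges are the edges of `X`
having both endpoints in `S`. -/
def induced (S : Set X.V) : Digraph' where
  V := S
  E := {e : X.E // X.src e ∈ S ∧ X.tgt e ∈ S}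
  src e := ⟨X.src e.1, e.2.1⟩
  tgt e := ⟨X.tgt e.1, e.2.2⟩

end Digraph'

/-- A morphism of directed multigraphs. -/
structure DigraphHom (Y X : Digraph') where
  onV : Y.V → X.V
  onE : Y.E → X.E
  map_src : ∀ e, X.src (onE e) = onV (Y.src e)
  map_tgt : ∀ e, X.tgt (onE e) = onV (Y.tgt e)

namespace DigraphHom

/-- The identity morphism. -/
def id (X : Digraph') : DigraphHom X X :=
  ⟨fun v => v, fun e => e, fun _ => rfl, fun _ => rfl⟩

/-- Composition of morphisms of directed multigraphs. -/
def comp {Z Y X : Digraph'} (g : DigraphHom Y X) (f : DigraphHom Z Y) :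
    DigraphHom Z X where
  onV := g.onV ∘ f.onV
  onE := g.onE ∘ f.onE
  map_src e := by simp only [Function.comp_apply, g.map_src, f.map_src]
  map_tgt e := by simp only [Function.comp_apply, g.map_tgt, f.map_tgt]

end DigraphHom

/-- A covering of directed multigraphs: a surjective morphism which is a local
bijection (it restricts to a bijection on the edges emanating from, respectively
arriving at, each given vertex). -/
def IsGraphCovering {Y X : Digraph'} (f : DigraphHom Y X) : Prop :=
  Function.Surjective f.onV ∧
    (∀ v : Y.V, Set.BijOn f.onE {e | Y.src e = v} {e | X.src e = f.onV v}) ∧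
    (∀ v : Y.V, Set.BijOn f.onE {e | Y.tgt e = v} {e | X.tgt e = f.onV v})

/-- A morphism of graphs is `d`-sheeted if every vertex downstairs has exactly `d`
preimages. -/
def IsSheeted {Y X : Digraph'} (f : DigraphHom Y X) (d : ℕ) : Prop :=
  ∀ x : X.V, Nat.card {y : Y.V // f.onV y = x} = d

/-- The group of deck transformations of `f : Y → X`: pairs of permutations of the
vertices and of the edges of `Y` which are compatible with the graph structure and
commute with `f`. -/
def DeckGroup {Y X : Digraph'} (f : DigraphHom Y X) :
    Subgroup (Equiv.Perm Y.V × Equiv.Perm Y.E) where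
  carrier := {σ | (∀ e, Y.src (σ.2 e) = σ.1 (Y.src e)) ∧
    (∀ e, Y.tgt (σ.2 e) = σ.1 (Y.tgt e)) ∧
    (∀ v, f.onV (σ.1 v) = f.onV v) ∧ (∀ e, f.onE (σ.2 e) = f.onE e)}
  one_mem' := ⟨fun _ => rfl, fun _ => rfl, fun _ => rfl, fun _ => rfl⟩
  mul_mem' := by
    rintro σ τ ⟨h1, h2, h3, h4⟩ ⟨g1, g2, g3, g4⟩
    exact ⟨fun e => by simp [Equiv.Perm.mul_apply, h1, g1],
      fun e => by simp [Equiv.Perm.mul_apply, h2, g2],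
      fun v => by simp [Equiv.Perm.mul_apply, h3, g3],
      fun e => by simp [Equiv.Perm.mul_apply, h4, g4]⟩
  inv_mem' := by
    rintro σ ⟨h1, h2, h3, h4⟩
    refine ⟨fun e => ?_, fun e => ?_, fun v => ?_, fun e => ?_⟩
    · have := h1 (σ.2⁻¹ e)
      simp only [Equiv.Perm.coe_inv, Equiv.apply_symm_apply] at this
      simp [Prod.fst_inv, Prod.snd_inv, this]
    · have := h2 (σ.2⁻¹ e)
      simp only [Equiv.Perm.coe_inv, Equiv.apply_symm_apply] at this
      simp [Prod.fst_inv, Prod.snd_inv, this]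
    · have := h3 (σ.1⁻¹ v)
      simp only [Equiv.Perm.coe_inv, Equiv.apply_symm_apply] at this
      simp [Prod.fst_inv, this]
    · have := h4 (σ.2⁻¹ e)
      simp only [Equiv.Perm.coe_inv, Equiv.apply_symm_apply] at this
      simp [Prod.snd_inv, this]

/-- A covering is Galois if it is `d`-sheeted where `d` is the number of its deck
transformations. -/
def IsGaloisCov {Y X : Digraph'} (f : DigraphHom Y X) : Prop :=
  IsGraphCovering f ∧ ∃ d : ℕ, IsSheeted f d ∧ Nat.card ↥(DeckGroup f) = d

/-- An isomorphism of directed multigraphs. -/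
structure DigraphIso (Y X : Digraph') where
  onV : Y.V ≃ X.V
  onE : Y.E ≃ X.E
  map_src : ∀ e, X.src (onE e) = onV (Y.src e)
  map_tgt : ∀ e, X.tgt (onE e) = onV (Y.tgt e)

/-- An undirected multigraph, encoded à la Serre: every undirected edge is recorded
as a pair of mutually inverse directed edges. -/
structure SerreGraph : Type 1 extends Digraph' where
  inv : E → E
  inv_inv : ∀ e, inv (inv e) = e
  src_inv : ∀ e, src (inv e) = tgt e
  tgt_inv : ∀ e, tgt (inv e) = src e

namespace SerreGraph

variable (X : SerreGraph)

/-- The subgraph of an undirected multigraph generated by a set `S` of vertices. -/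
def inducedClosed (S : Set X.V) : SerreGraph where
  V := S
  E := {e : X.E // X.src e ∈ S ∧ X.tgt e ∈ S}
  src e := ⟨X.src e.1, e.2.1⟩
  tgt e := ⟨X.tgt e.1, e.2.2⟩
  inv e := ⟨X.inv e.1, by rw [X.src_inv, X.tgt_inv]; exact ⟨e.2.2, e.2.1⟩⟩
  inv_inv e := Subtype.ext (X.inv_inv e.1)
  src_inv e := Subtype.ext (X.src_inv e.1)
  tgt_inv e := Subtype.ext (X.tgt_inv e.1)

/-- The connected component of a vertex, as an undirected multigraph. -/
def component (v : X.V) : SerreGraph :=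
  X.inducedClosed (X.toDigraph'.ComponentSet v)

end SerreGraph

/-- The undirected multigraph underlying a directed multigraph (the image of the
directed graph under the forgetful map). -/
def Digraph'.toSerre (X : Digraph') : SerreGraph where
  V := X.V
  E := X.E × Bool
  src e := if e.2 then X.src e.1 else X.tgt e.1
  tgt e := if e.2 then X.tgt e.1 else X.src e.1
  inv e := (e.1, !e.2)
  inv_inv e := by cases e with
    | mk a b => cases b <;> rfl
  src_inv e := by cases e with
    | mk a b => cases b <;> rfl
  tgt_inv e := by cases e with
    | mk a b => cases b <;> rfl

/-- A morphism of undirected multigraphs. -/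
structure SerreHom (Y X : SerreGraph) where
  onV : Y.V → X.V
  onE : Y.E → X.E
  map_src : ∀ e, X.src (onE e) = onV (Y.src e)
  map_tgt : ∀ e, X.tgt (onE e) = onV (Y.tgt e)
  map_inv : ∀ e, X.inv (onE e) = onE (Y.inv e)

/-- The underlying morphism of directed multigraphs. -/
def SerreHom.toDigraphHom {Y X : SerreGraph} (f : SerreHom Y X) :
    DigraphHom Y.toDigraph' X.toDigraph' :=
  ⟨f.onV, f.onE, f.map_src, f.map_tgt⟩

/-- An isomorphism of undirected multigraphs. -/
structure SerreIso (Y X : SerreGraph) where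
  onV : Y.V ≃ X.V
  onE : Y.E ≃ X.E
  map_src : ∀ e, X.src (onE e) = onV (Y.src e)
  map_tgt : ∀ e, X.tgt (onE e) = onV (Y.tgt e)
  map_inv : ∀ e, X.inv (onE e) = onE (Y.inv e)

/-- The group of deck transformations of a morphism of undirected multigraphs. -/
def SerreDeckGroup {Y X : SerreGraph} (f : SerreHom Y X) :
    Subgroup (Equiv.Perm Y.V × Equiv.Perm Y.E) where
  carrier := {σ | (∀ e, Y.src (σ.2 e) = σ.1 (Y.src e)) ∧
    (∀ e, Y.tgt (σ.2 e) = σ.1 (Y.tgt e)) ∧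
    (∀ e, Y.inv (σ.2 e) = σ.2 (Y.inv e)) ∧
    (∀ v, f.onV (σ.1 v) = f.onV v) ∧ (∀ e, f.onE (σ.2 e) = f.onE e)}
  one_mem' := ⟨fun _ => rfl, fun _ => rfl, fun _ => rfl, fun _ => rfl, fun _ => rfl⟩
  mul_mem' := by
    rintro σ τ ⟨h1, h2, h3, h4, h5⟩ ⟨g1, g2, g3, g4, g5⟩
    exact ⟨fun e => by simp [Equiv.Perm.mul_apply, h1, g1],
      fun e => by simp [Equiv.Perm.mul_apply, h2, g2],
      fun e => by simp [Equiv.Perm.mul_apply, h3, g3],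
      fun v => by simp [Equiv.Perm.mul_apply, h4, g4],
      fun e => by simp [Equiv.Perm.mul_apply, h5, g5]⟩
  inv_mem' := by
    rintro σ ⟨h1, h2, h3, h4, h5⟩
    refine ⟨fun e => ?_, fun e => ?_, fun e => ?_, fun v => ?_, fun e => ?_⟩
    · have := h1 (σ.2⁻¹ e)
      simp only [Equiv.Perm.coe_inv, Equiv.apply_symm_apply] at this
      simp [Prod.fst_inv, Prod.snd_inv, this]
    · have := h2 (σ.2⁻¹ e)
      simp only [Equiv.Perm.coe_inv, Equiv.apply_symm_apply] at this
      simp [Prod.fst_inv, Prod.snd_inv, this]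
    · have := h3 (σ.2⁻¹ e)
      simp only [Equiv.Perm.coe_inv, Equiv.apply_symm_apply] at this
      simp only [Prod.snd_inv]
      rw [this]
      simp
    · have := h4 (σ.1⁻¹ v)
      simp only [Equiv.Perm.coe_inv, Equiv.apply_symm_apply] at this
      simp [Prod.fst_inv, this]
    · have := h5 (σ.2⁻¹ e)
      simp only [Equiv.Perm.coe_inv, Equiv.apply_symm_apply] at this
      simp [Prod.snd_inv, this]

/-- A morphism of undirected multigraphs is a Galois covering if it is a covering
which is `d`-sheeted, where `d` is the number of its deck transformations. -/
def IsGaloisSerreCov {Y X : SerreGraph} (f : SerreHom Y X) : Prop :=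
  IsGraphCovering f.toDigraphHom ∧
    ∃ d : ℕ, IsSheeted f.toDigraphHom d ∧ Nat.card ↥(SerreDeckGroup f) = d
/-- A voltage assignment on an undirected multigraph, with values in a
(multiplicative) group `G`. -/
structure Voltage (X : SerreGraph) (G : Type) [Group G] where
  fn : X.E → G
  compat : ∀ e, fn (X.inv e) = (fn e)⁻¹

/-- The derived graph of a (multiplicative) voltage assignment. -/
def SerreGraph.derived (X : SerreGraph) (G : Type) [Group G] (α : Voltage X G) :
    SerreGraph where
  V := X.V × G
  E := X.E × G
  src e := (X.src e.1, e.2)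
  tgt e := (X.tgt e.1, e.2 * α.fn e.1)
  inv e := (X.inv e.1, e.2 * α.fn e.1)
  inv_inv e := by
    obtain ⟨a, g⟩ := e
    simp [α.compat, X.inv_inv, mul_assoc]
  src_inv e := by
    obtain ⟨a, g⟩ := e
    simp [X.src_inv]
  tgt_inv e := by
    obtain ⟨a, g⟩ := e
    simp [X.tgt_inv, α.compat, mul_assoc]

/-- A voltage assignment on an undirected multigraph, with values in an additive
group `G`. -/
structure AddVoltage (X : SerreGraph) (G : Type) [AddGroup G] where
  fn : X.E → G
  compat : ∀ e, fn (X.inv e) = -(fn e)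

/-- Post-composition of an additive voltage assignment with a map of additive
groups preserving negation. -/
def AddVoltage.comp {X : SerreGraph} {G H : Type} [AddGroup G] [AddGroup H]
    (α : AddVoltage X G) (f : G → H) (hf : ∀ x, f (-x) = -(f x)) : AddVoltage X H :=
  ⟨fun e => f (α.fn e), fun e => by show f (α.fn (X.inv e)) = -(f (α.fn e)); rw [α.compat, hf]⟩

/-- The derived graph of an additive voltage assignment. -/
def SerreGraph.derivedAdd (X : SerreGraph) (G : Type) [AddGroup G]
    (α : AddVoltage X G) : SerreGraph where
  V := X.V × G
  E := X.E × G
  src e := (X.src e.1, e.2)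
  tgt e := (X.tgt e.1, e.2 + α.fn e.1)
  inv e := (X.inv e.1, e.2 + α.fn e.1)
  inv_inv e := by
    obtain ⟨a, g⟩ := e
    simp [α.compat, X.inv_inv, add_assoc]
  src_inv e := by
    obtain ⟨a, g⟩ := e
    simp [X.src_inv]
  tgt_inv e := by
    obtain ⟨a, g⟩ := e
    simp [X.tgt_inv, α.compat, add_assoc]

/-- The derived graph `X_n = X(ℤ/pⁿℤ, αₙ)` of the reduction `αₙ` modulo `pⁿ` of a
`ℤₚ`-valued voltage assignment `α`. -/
noncomputable def Xlevel (p : ℕ) [Fact p.Prime] (X : SerreGraph)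
    (α : AddVoltage X ℤ_[p]) (n : ℕ) : SerreGraph :=
  X.derivedAdd (ZMod (p ^ n))
    (α.comp (PadicInt.toZModPow n) (fun x => by simp [map_neg]))

/-- The natural projection `X_m → X_n` (for `n ≤ m`) between the derived graphs of
the reductions of a `ℤₚ`-valued voltage assignment, induced by the projection
`ℤ/pᵐℤ → ℤ/pⁿℤ`. -/
noncomputable def levelProj (p : ℕ) [Fact p.Prime] (X : SerreGraph)
    (α : AddVoltage X ℤ_[p]) {n m : ℕ} (h : n ≤ m) :
    SerreHom (Xlevel p X α m) (Xlevel p X α n) where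
  onV v := (v.1, ZMod.castHom (pow_dvd_pow p h) (ZMod (p ^ n)) v.2)
  onE e := (e.1, ZMod.castHom (pow_dvd_pow p h) (ZMod (p ^ n)) e.2)
  map_src e := rfl
  map_tgt e := by
    obtain ⟨a, g⟩ := e
    show (X.tgt a, ZMod.castHom (pow_dvd_pow p h) (ZMod (p ^ n)) g +
        PadicInt.toZModPow n (α.fn a)) =
      (X.tgt a, ZMod.castHom (pow_dvd_pow p h) (ZMod (p ^ n))
        (g + PadicInt.toZModPow m (α.fn a)))
    rw [map_add, ZMod.castHom_apply, ZMod.castHom_apply,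
      PadicInt.cast_toZModPow n m h]
  map_inv e := by
    obtain ⟨a, g⟩ := e
    show (X.inv a, ZMod.castHom (pow_dvd_pow p h) (ZMod (p ^ n)) g +
        PadicInt.toZModPow n (α.fn a)) =
      (X.inv a, ZMod.castHom (pow_dvd_pow p h) (ZMod (p ^ n))
        (g + PadicInt.toZModPow m (α.fn a)))
    rw [map_add, ZMod.castHom_apply, ZMod.castHom_apply,
      PadicInt.cast_toZModPow n m h]


/-! The projection `X_m → X_{m₀}` only changes the fibre coordinate, by the surjection
`π : ℤ/pᵐ → ℤ/p^{m₀}`, and it is a local bijection. Over a connected base, the components of a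
derived graph `X(G, β)` are the orbits of the subgroup `H ≤ G` of fibre translations preserving
every component, so there are `[G : H]` of them. The projection maps `H_m` into `H_{m₀}`, and
`H_m` and `π⁻¹(H_{m₀})` have the same index (the common number of components), hence
`ker π ≤ H_m`. Consequently the lifts of a vertex of `𝒢_{m₀}` all lie in one component `𝒢_m`,
which is therefore unique; the projection `𝒢_m → 𝒢_{m₀}` is a covering (path lifting) on whose
fibres `ker π ≅ ℤ/p^{m-m₀}` acts simply transitively by translations, and by rigidity of deck
transformations of a connected cover these translations form the whole deck group. -/

theorem DigraphHom.reach {Y X : Digraph'} (f : DigraphHom Y X) {v w : Y.V}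
    (h : Y.Reach v w) : X.Reach (f.onV v) (f.onV w) := by
  induction h with
  | rel a b hab =>
    obtain ⟨e, rfl, rfl⟩ := hab
    exact .rel _ _ ⟨f.onE e, f.map_src e, f.map_tgt e⟩
  | refl => exact .refl _
  | symm _ _ _ ih => exact .symm _ _ ih
  | trans _ _ _ _ _ ih₁ ih₂ => exact .trans _ _ _ ih₁ ih₂

theorem Digraph'.componentSet_eq_of_reach {X : Digraph'} {v w : X.V} (h : X.Reach v w) :
    X.ComponentSet w = X.ComponentSet v :=
  Set.ext fun _ => ⟨.trans _ _ _ h, .trans _ _ _ (.symm _ _ h)⟩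

namespace SerreGraph

variable {X : SerreGraph}

theorem adj_symm {v w : X.V} (h : X.Adj v w) : X.Adj w v := by
  obtain ⟨e, rfl, rfl⟩ := h
  exact ⟨X.inv e, X.src_inv e, X.tgt_inv e⟩

theorem mem_componentSet_of_adj {u v w : X.V} (hv : v ∈ X.ComponentSet u)
    (h : X.Adj v w) : w ∈ X.ComponentSet u :=
  .trans _ _ _ hv (.rel _ _ h)

theorem Reach.induction {P : X.V → Prop} (hP : ∀ a b, X.Adj a b → P a → P b)
    {v w : X.V} (h : X.Reach v w) (hv : P v) : P w := by
  suffices ∀ a b, X.Reach a b → (P a ↔ P b) from (this v w h).1 hv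
  intro a b hab
  induction hab with
  | rel a b hab => exact ⟨hP a b hab, hP b a (adj_symm hab)⟩
  | refl => exact .rfl
  | symm _ _ _ ih => exact ih.symm
  | trans _ _ _ _ _ ih₁ ih₂ => exact ih₁.trans ih₂

theorem component_connected (w : X.V) : (X.component w).Connected := by
  have key : ∀ v (hv : v ∈ X.ComponentSet w), (X.component w).Reach ⟨w, .refl _⟩ ⟨v, hv⟩ := by
    intro v hv
    refine Reach.induction (P := fun v => ∀ hv, (X.component w).Reach ⟨w, .refl _⟩ ⟨v, hv⟩)
      (fun a b hab ha hb => ?_) hv (fun _ => .refl _) hv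
    have ha' : a ∈ X.ComponentSet w := mem_componentSet_of_adj hb (adj_symm hab)
    obtain ⟨e, rfl, rfl⟩ := hab
    exact .trans _ _ _ (ha ha') (.rel _ _ ⟨⟨e, ha', hb⟩, rfl, rfl⟩)
  rintro ⟨u, hu⟩ ⟨v, hv⟩
  exact .trans _ _ _ (.symm _ _ (key u hu)) (key v hv)

end SerreGraph

namespace SerreHom

variable {Y X : SerreGraph} (f : SerreHom Y X)

/-- Bijectivity on incoming edges then follows from the edge inversion
(`IsLocallyBijective.bijOn_tgt`). -/
def IsLocallyBijective : Prop :=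
  ∀ v : Y.V, Set.BijOn f.onE {e | Y.src e = v} {e | X.src e = f.onV v}

def restrict (S : Set Y.V) (T : Set X.V) (h : Set.MapsTo f.onV S T) :
    SerreHom (Y.inducedClosed S) (X.inducedClosed T) where
  onV v := ⟨f.onV v.1, h v.2⟩
  onE e := ⟨f.onE e.1, by rw [f.map_src]; exact h e.2.1, by rw [f.map_tgt]; exact h e.2.2⟩
  map_src e := Subtype.ext (f.map_src e.1)
  map_tgt e := Subtype.ext (f.map_tgt e.1)
  map_inv e := Subtype.ext (f.map_inv e.1)

theorem mapsTo_componentSet (w : Y.V) :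
    Set.MapsTo f.onV (Y.ComponentSet w) (X.ComponentSet (f.onV w)) :=
  fun _ hv => f.toDigraphHom.reach hv

def restrictComponent (w : Y.V) : SerreHom (Y.component w) (X.component (f.onV w)) :=
  f.restrict _ _ (f.mapsTo_componentSet w)

namespace IsLocallyBijective

variable {f}

theorem bijOn_tgt (hf : f.IsLocallyBijective) (v : Y.V) :
    Set.BijOn f.onE {e | Y.tgt e = v} {e | X.tgt e = f.onV v} := by
  have hinv : ∀ e, f.onE (Y.inv e) = X.inv (f.onE e) := fun e => (f.map_inv e).symm
  refine ⟨fun e (he : Y.tgt e = v) => (f.map_tgt e).trans (congrArg f.onV he), ?_, ?_⟩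
  · intro e₁ (he₁ : Y.tgt e₁ = v) e₂ (he₂ : Y.tgt e₂ = v) h
    have := (hf v).injOn (by simp [Y.src_inv, he₁]) (by simp [Y.src_inv, he₂])
      (by rw [hinv, hinv, h] : f.onE (Y.inv e₁) = f.onE (Y.inv e₂))
    rw [← Y.inv_inv e₁, this, Y.inv_inv]
  · intro e' (he' : X.tgt e' = f.onV v)
    obtain ⟨e, he, hfe⟩ := (hf v).surjOn (by simp [X.src_inv, he'] : X.src (X.inv e') = f.onV v)
    exact ⟨Y.inv e, by simpa [Y.tgt_inv] using he, by rw [hinv, hfe, X.inv_inv]⟩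

theorem isGraphCovering (hf : f.IsLocallyBijective) (hsurj : Function.Surjective f.onV) :
    IsGraphCovering f.toDigraphHom :=
  ⟨hsurj, hf, hf.bijOn_tgt⟩

theorem exists_lift (hf : f.IsLocallyBijective) {w : Y.V} {y : X.V}
    (h : X.Reach (f.onV w) y) : ∃ v, Y.Reach w v ∧ f.onV v = y := by
  refine SerreGraph.Reach.induction (P := fun a => ∃ v, Y.Reach w v ∧ f.onV v = a)
    (fun a b hab ha => ?_) h ⟨w, .refl _, rfl⟩
  obtain ⟨v, hv, rfl⟩ := ha
  obtain ⟨e', he', rfl⟩ := hab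
  obtain ⟨e, he, rfl⟩ := (hf v).surjOn he'
  exact ⟨Y.tgt e, .trans _ _ _ hv (.rel _ _ ⟨e, he, rfl⟩), (f.map_tgt e).symm⟩

theorem restrict (hf : f.IsLocallyBijective) {S : Set Y.V} {T : Set X.V}
    (h : Set.MapsTo f.onV S T) (hS : ∀ e, Y.src e ∈ S → Y.tgt e ∈ S) :
    (f.restrict S T h).IsLocallyBijective := by
  intro v
  refine ⟨fun e (he : _ = v) => Subtype.ext ((f.map_src e.1).trans (congrArg (f.onV ·.1) he)),
    fun e₁ he₁ e₂ he₂ h => Subtype.ext ((hf v.1).injOn (congrArg Subtype.val he₁)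
      (congrArg Subtype.val he₂) (congrArg Subtype.val h)), ?_⟩
  intro e' (he' : _ = _)
  obtain ⟨e, he, hfe⟩ := (hf v.1).surjOn (congrArg Subtype.val he')
  have hsrc : Y.src e ∈ S := he ▸ v.2
  exact ⟨⟨e, hsrc, hS e hsrc⟩, Subtype.ext he, Subtype.ext hfe⟩

theorem restrictComponent (hf : f.IsLocallyBijective) (w : Y.V) :
    (f.restrictComponent w).IsLocallyBijective :=
  hf.restrict _ fun e he => SerreGraph.mem_componentSet_of_adj he ⟨e, rfl, rfl⟩

theorem restrictComponent_isGraphCovering (hf : f.IsLocallyBijective) (w : Y.V) :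
    IsGraphCovering (f.restrictComponent w).toDigraphHom := by
  refine (hf.restrictComponent w).isGraphCovering fun y => ?_
  obtain ⟨v, hv, hfv⟩ := hf.exists_lift y.2
  exact ⟨⟨v, hv⟩, Subtype.ext hfv⟩

theorem eq_of_mem_serreDeckGroup (hf : f.IsLocallyBijective) (hY : Y.Connected)
    {σ τ : Equiv.Perm Y.V × Equiv.Perm Y.E} (hσ : σ ∈ SerreDeckGroup f)
    (hτ : τ ∈ SerreDeckGroup f) {v₀ : Y.V} (h : σ.1 v₀ = τ.1 v₀) : σ = τ := by
  obtain ⟨hσs, hσt, -, -, hσf⟩ := hσ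
  obtain ⟨hτs, hτt, -, -, hτf⟩ := hτ
  have hE : ∀ e, σ.1 (Y.src e) = τ.1 (Y.src e) → σ.2 e = τ.2 e := fun e he =>
    (hf (σ.1 (Y.src e))).injOn (hσs e) ((hτs e).trans he.symm) ((hσf e).trans (hτf e).symm)
  have hV : ∀ v, σ.1 v = τ.1 v := fun v =>
    SerreGraph.Reach.induction (P := fun a => σ.1 a = τ.1 a) (fun a b hab ha => by
      obtain ⟨e, rfl, rfl⟩ := hab
      rw [← hσt, ← hτt, hE e ha]) (hY v₀ v) h
  exact Prod.ext (Equiv.ext hV) (Equiv.ext fun e => hE e (hV _))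

end IsLocallyBijective

end SerreHom

namespace AddVoltage

variable {X : SerreGraph} {G : Type} [AddCommGroup G] (β : AddVoltage X G)

def translate (t : G) : SerreHom (X.derivedAdd G β) (X.derivedAdd G β) where
  onV v := (v.1, v.2 + t)
  onE e := (e.1, e.2 + t)
  map_src _ := rfl
  map_tgt _ := Prod.ext rfl (add_right_comm _ _ _)
  map_inv _ := Prod.ext rfl (add_right_comm _ _ _)

variable {β}

theorem reach_of_sub_eq {x y : X.V} {a b a' b' : G}
    (h : (X.derivedAdd G β).Reach (x, a) (y, b)) (hab : b' - a' = b - a) :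
    (X.derivedAdd G β).Reach (x, a') (y, b') := by
  have ha' : (x, a') = (β.translate (a' - a)).onV (x, a) :=
    Prod.ext rfl (show a' = a + (a' - a) by abel)
  have hb' : (y, b') = (β.translate (a' - a)).onV (y, b) :=
    Prod.ext rfl (show b' = b + (a' - a) by rw [← sub_add_cancel b' a', hab]; abel)
  rw [ha', hb']
  exact (β.translate (a' - a)).toDigraphHom.reach h

theorem exists_reach_fiber (hconn : X.Connected) (x y : X.V) (g : G) :
    ∃ h, (X.derivedAdd G β).Reach (x, g) (y, h) := by
  refine SerreGraph.Reach.induction (P := fun b => ∃ h, (X.derivedAdd G β).Reach (x, g) (b, h))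
    (fun a b hab ha => ?_) (hconn x y) ⟨g, .refl _⟩
  obtain ⟨e, rfl, rfl⟩ := hab
  obtain ⟨h, hh⟩ := ha
  exact ⟨h + β.fn e, .trans _ _ _ hh (.rel _ _ ⟨(e, h), rfl, rfl⟩)⟩

variable (β)

def fiberStab : AddSubgroup G where
  carrier := {t | ∀ x g, (X.derivedAdd G β).Reach (x, g) (x, g + t)}
  zero_mem' x g := by rw [add_zero]; exact .refl _
  add_mem' {s t} hs ht x g := by rw [← add_assoc]; exact .trans _ _ _ (hs x g) (ht x (g + s))
  neg_mem' {t} ht x g := .symm _ _ (reach_of_sub_eq (ht x g) (by abel))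

variable {β}

theorem mem_fiberStab_of_reach (hconn : X.Connected) {x : X.V} {t : G}
    (h : (X.derivedAdd G β).Reach (x, 0) (x, t)) : t ∈ β.fiberStab := by
  intro y g
  obtain ⟨s, hs⟩ := exists_reach_fiber (β := β) hconn x y 0
  exact .trans _ _ _ (.symm _ _ (reach_of_sub_eq hs (a' := g - s) (by abel)))
    (.trans _ _ _ (reach_of_sub_eq h (a' := g - s) (b' := g - s + t) (by abel))
      (reach_of_sub_eq hs (by abel)))

theorem reach_fiber_iff (hconn : X.Connected) {x : X.V} {g h : G} :
    (X.derivedAdd G β).Reach (x, g) (x, h) ↔ h - g ∈ β.fiberStab :=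
  ⟨fun hr => mem_fiberStab_of_reach hconn (reach_of_sub_eq hr (by abel)),
    fun hm => by simpa using hm x g⟩

theorem numComponents_derivedAdd [Nonempty X.V] (hconn : X.Connected) :
    (X.derivedAdd G β).NumComponents = β.fiberStab.index := by
  obtain ⟨x₀⟩ := ‹Nonempty X.V›
  have hrel : ∀ a b : G, QuotientAddGroup.leftRel β.fiberStab a b ↔
      (X.derivedAdd G β).Reach (x₀, a) (x₀, b) := fun a b => by
    rw [QuotientAddGroup.leftRel_apply, reach_fiber_iff hconn, neg_add_eq_sub]
  let φ : G ⧸ β.fiberStab → Quot (X.derivedAdd G β).Adj :=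
    Quotient.lift (fun g => Quot.mk _ (x₀, g)) fun a b hab => Quot.eqvGen_sound ((hrel a b).1 hab)
  refine (Nat.card_congr (Equiv.ofBijective φ ⟨fun qa qb h => ?_, fun q => ?_⟩)).symm
  · induction qa using Quotient.inductionOn
    induction qb using Quotient.inductionOn
    exact Quotient.sound ((hrel _ _).2 (Quot.eqvGen_exact h))
  · obtain ⟨⟨y, g⟩, rfl⟩ := Quot.exists_rep q
    obtain ⟨h, hh⟩ := exists_reach_fiber (β := β) hconn y x₀ g
    exact ⟨Quotient.mk _ h, (Quot.eqvGen_sound hh).symm⟩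

section Projection

variable {G' : Type} [AddCommGroup G'] {β' : AddVoltage X G'} {π : G →+ G'}

variable (π) in
def derivedMap (hπ : ∀ e, β'.fn e = π (β.fn e)) :
    SerreHom (X.derivedAdd G β) (X.derivedAdd G' β') where
  onV v := (v.1, π v.2)
  onE e := (e.1, π e.2)
  map_src _ := rfl
  map_tgt e := Prod.ext rfl (show π e.2 + β'.fn e.1 = π (e.2 + β.fn e.1) by rw [map_add, hπ])
  map_inv e := Prod.ext rfl (show π e.2 + β'.fn e.1 = π (e.2 + β.fn e.1) by rw [map_add, hπ])

theorem derivedMap_onV_eq_iff (hπ : ∀ e, β'.fn e = π (β.fn e)) {v v' : (X.derivedAdd G β).V} :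
    (derivedMap π hπ).onV v = (derivedMap π hπ).onV v' ↔ v.1 = v'.1 ∧ v'.2 - v.2 ∈ π.ker := by
  rw [AddMonoidHom.mem_ker, map_sub, sub_eq_zero, eq_comm (a := π v'.2)]
  exact Prod.ext_iff

theorem derivedMap_isLocallyBijective (hπ : ∀ e, β'.fn e = π (β.fn e)) :
    (derivedMap π hπ).IsLocallyBijective := by
  intro v
  refine ⟨fun e (he : _ = v) => ((derivedMap π hπ).map_src e).trans (congrArg _ he), ?_, ?_⟩
  · rintro ⟨a₁, g₁⟩ (h₁ : (_, _) = v) ⟨a₂, g₂⟩ (h₂ : (_, _) = v) h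
    exact Prod.ext (Prod.ext_iff.1 h).1 ((Prod.ext_iff.1 h₁).2.trans (Prod.ext_iff.1 h₂).2.symm)
  · rintro ⟨a, g'⟩ (h : (_, _) = (_, _))
    exact ⟨(a, v.2), Prod.ext (Prod.ext_iff.1 h).1 rfl, Prod.ext rfl (Prod.ext_iff.1 h).2.symm⟩

theorem fiberStab_le_comap (hπ : ∀ e, β'.fn e = π (β.fn e)) (hconn : X.Connected) [Nonempty X.V] :
    β.fiberStab ≤ β'.fiberStab.comap π := by
  obtain ⟨x⟩ := ‹Nonempty X.V›
  intro t ht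
  have := (derivedMap π hπ).toDigraphHom.reach
    ((reach_fiber_iff hconn (x := x) (g := 0) (h := t)).2 (by rwa [sub_zero]))
  simpa using (reach_fiber_iff hconn).1 this

theorem ker_le_fiberStab (hπ : ∀ e, β'.fn e = π (β.fn e)) (hconn : X.Connected)
    [Nonempty X.V] [Finite G]
    (hsurj : Function.Surjective π)
    (h : (X.derivedAdd G β).NumComponents = (X.derivedAdd G' β').NumComponents) :
    π.ker ≤ β.fiberStab := by
  have hidx : (β'.fiberStab.comap π).index = β.fiberStab.index := by
    rw [AddSubgroup.index_comap_of_surjective _ hsurj, ← numComponents_derivedAdd hconn,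
      ← numComponents_derivedAdd hconn, h]
  have heq : β.fiberStab = β'.fiberStab.comap π :=
    (fiberStab_le_comap hπ hconn).eq_of_not_lt fun hlt =>
      (AddSubgroup.index_strictAnti hlt).ne hidx
  rw [heq, ← AddMonoidHom.comap_bot]
  exact AddSubgroup.comap_mono bot_le

theorem mem_componentSet_add {w v : (X.derivedAdd G β).V} {t : G}
    (hv : v ∈ (X.derivedAdd G β).ComponentSet w) (ht : t ∈ β.fiberStab) :
    ((v.1, v.2 + t) : (X.derivedAdd G β).V) ∈ (X.derivedAdd G β).ComponentSet w :=
  .trans _ _ _ hv (ht v.1 v.2)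

variable (β) in
def componentTranslate (w : (X.derivedAdd G β).V) :
    Multiplicative β.fiberStab →* Equiv.Perm ((X.derivedAdd G β).component w).V ×
      Equiv.Perm ((X.derivedAdd G β).component w).E where
  toFun t :=
    ({ toFun v := ⟨(v.1.1, v.1.2 + t.toAdd), mem_componentSet_add v.2 t.toAdd.2⟩
       invFun v := ⟨(v.1.1, v.1.2 + -t.toAdd), mem_componentSet_add v.2 (neg_mem t.toAdd.2)⟩
       left_inv v := Subtype.ext (Prod.ext rfl (add_neg_cancel_right _ _))
       right_inv v := Subtype.ext (Prod.ext rfl (neg_add_cancel_right _ _)) },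
     { toFun e := ⟨(e.1.1, e.1.2 + t.toAdd), mem_componentSet_add e.2.1 t.toAdd.2,
          SerreGraph.mem_componentSet_of_adj (mem_componentSet_add e.2.1 t.toAdd.2) ⟨_, rfl, rfl⟩⟩
       invFun e := ⟨(e.1.1, e.1.2 + -t.toAdd), mem_componentSet_add e.2.1 (neg_mem t.toAdd.2),
          SerreGraph.mem_componentSet_of_adj (mem_componentSet_add e.2.1 (neg_mem t.toAdd.2))
            ⟨_, rfl, rfl⟩⟩
       left_inv e := Subtype.ext (Prod.ext rfl (add_neg_cancel_right _ _))
       right_inv e := Subtype.ext (Prod.ext rfl (neg_add_cancel_right _ _)) })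
  map_one' := Prod.ext (Equiv.ext fun v => Subtype.ext (Prod.ext rfl (add_zero _)))
    (Equiv.ext fun e => Subtype.ext (Prod.ext rfl (add_zero _)))
  map_mul' s t := Prod.ext
    (Equiv.ext fun v => Subtype.ext (Prod.ext rfl
      (show v.1.2 + (s.toAdd + t.toAdd : β.fiberStab) = v.1.2 + (t.toAdd : G) + (s.toAdd : G) by
        rw [AddSubgroup.coe_add]; abel)))
    (Equiv.ext fun e => Subtype.ext (Prod.ext rfl
      (show e.1.2 + (s.toAdd + t.toAdd : β.fiberStab) = e.1.2 + (t.toAdd : G) + (s.toAdd : G) by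
        rw [AddSubgroup.coe_add]; abel)))

theorem componentTranslate_mem_serreDeckGroup (hπ : ∀ e, β'.fn e = π (β.fn e))
    (w : (X.derivedAdd G β).V) {t : Multiplicative β.fiberStab} (ht : π t.toAdd = 0) :
    componentTranslate β w t ∈ SerreDeckGroup ((derivedMap π hπ).restrictComponent w) := by
  have hfix : ∀ g, π (g + t.toAdd) = π g := fun g => by rw [map_add, ht, add_zero]
  exact ⟨fun _ => rfl, fun _ => Subtype.ext (Prod.ext rfl (add_right_comm _ _ _)),
    fun _ => Subtype.ext (Prod.ext rfl (add_right_comm _ _ _)),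
    fun _ => Subtype.ext (Prod.ext rfl (hfix _)), fun _ => Subtype.ext (Prod.ext rfl (hfix _))⟩

def deckHom (hπ : ∀ e, β'.fn e = π (β.fn e)) (hK : π.ker ≤ β.fiberStab)
    (w : (X.derivedAdd G β).V) :
    Multiplicative π.ker →* SerreDeckGroup ((derivedMap π hπ).restrictComponent w) :=
  ((componentTranslate β w).comp (AddSubgroup.inclusion hK).toMultiplicative).codRestrict _
    fun t => componentTranslate_mem_serreDeckGroup hπ w t.toAdd.2

theorem deckHom_bijective (hπ : ∀ e, β'.fn e = π (β.fn e)) (hK : π.ker ≤ β.fiberStab)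
    (w : (X.derivedAdd G β).V) : Function.Bijective (deckHom hπ hK w) := by
  let w₀ : ((X.derivedAdd G β).component w).V := ⟨w, .refl _⟩
  refine ⟨(injective_iff_map_eq_one _).2 fun t ht => ?_, fun σ => ?_⟩
  · have : w.2 + (t.toAdd : G) = w.2 :=
      congrArg (fun σ : SerreDeckGroup _ => (σ.1.1 w₀).1.2) ht
    exact toAdd_eq_zero.1 (Subtype.ext (add_eq_left.1 this))
  · obtain ⟨hx, hg⟩ := (derivedMap_onV_eq_iff hπ).1 (congrArg Subtype.val (σ.2.2.2.2.1 w₀)).symm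
    refine ⟨.ofAdd ⟨_, hg⟩, Subtype.ext ?_⟩
    exact ((derivedMap_isLocallyBijective hπ).restrictComponent w).eq_of_mem_serreDeckGroup
      (SerreGraph.component_connected w) (deckHom hπ hK w _).2 σ.2
      (Subtype.ext (Prod.ext hx (add_sub_cancel _ _)))

noncomputable def deckEquiv (hπ : ∀ e, β'.fn e = π (β.fn e)) (hK : π.ker ≤ β.fiberStab)
    (w : (X.derivedAdd G β).V) :
    SerreDeckGroup ((derivedMap π hπ).restrictComponent w) ≃* Multiplicative π.ker :=
  (MulEquiv.ofBijective _ (deckHom_bijective hπ hK w)).symm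

/-- The translations by `ker π` act simply transitively on each fibre. -/
theorem isSheeted_restrictComponent (hπ : ∀ e, β'.fn e = π (β.fn e))
    (hK : π.ker ≤ β.fiberStab) (w : (X.derivedAdd G β).V) :
    IsSheeted ((derivedMap π hπ).restrictComponent w).toDigraphHom (Nat.card π.ker) := by
  intro y
  obtain ⟨v₀, rfl⟩ :=
    ((derivedMap_isLocallyBijective hπ).restrictComponent_isGraphCovering w).1 y
  refine (Nat.card_congr (Equiv.ofBijective
    (fun t : π.ker => ⟨(deckHom hπ hK w (.ofAdd t)).1.1 v₀, (deckHom hπ hK w _).2.2.2.2.1 v₀⟩)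
    ⟨fun s t hst => ?_, fun v => ?_⟩)).symm
  · have : v₀.1.2 + (s : G) = v₀.1.2 + t :=
      congrArg (fun v : {v // _} => v.1.1.2) hst
    exact Subtype.ext (add_left_cancel this)
  · obtain ⟨hx, hg⟩ := (derivedMap_onV_eq_iff hπ).1 (congrArg Subtype.val v.2).symm
    exact ⟨⟨_, hg⟩, Subtype.ext (Subtype.ext (Prod.ext hx (add_sub_cancel _ _)))⟩

theorem componentSet_eq_of_image_subset (hπ : ∀ e, β'.fn e = π (β.fn e)) (hconn : X.Connected)
    (hK : π.ker ≤ β.fiberStab) {w w' : (X.derivedAdd G β).V}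
    (h : (derivedMap π hπ).onV '' (X.derivedAdd G β).ComponentSet w' ⊆
      (X.derivedAdd G' β').ComponentSet ((derivedMap π hπ).onV w)) :
    (X.derivedAdd G β).ComponentSet w' = (X.derivedAdd G β).ComponentSet w := by
  obtain ⟨v, hv, hfv⟩ := (derivedMap_isLocallyBijective hπ).exists_lift (h ⟨w', .refl _, rfl⟩)
  obtain ⟨hx, hg⟩ := (derivedMap_onV_eq_iff hπ).1 hfv
  obtain ⟨x, g⟩ := v
  obtain ⟨x', g'⟩ := w'
  obtain rfl : x = x' := hx
  exact Digraph'.componentSet_eq_of_reach (.trans _ _ _ hv ((reach_fiber_iff hconn).2 (hK hg)))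

end Projection

end AddVoltage

theorem ZMod.card_ker_castHom {a b : ℕ} [NeZero b] (h : a ∣ b) :
    Nat.card (ZMod.castHom h (ZMod a)).toAddMonoidHom.ker = b / a := by
  have ha : a ≠ 0 := by rintro rfl; exact NeZero.ne b (zero_dvd_iff.1 h)
  have := (ZMod.castHom h (ZMod a)).toAddMonoidHom.ker.card_mul_index
  rw [AddSubgroup.index_ker, AddMonoidHom.range_eq_top.2 (ZMod.castHom_surjective h),
    AddSubgroup.card_top, Nat.card_zmod, Nat.card_zmod] at this
  exact Nat.eq_div_of_mul_eq_left ha this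

theorem unique_component_tower_over_component_general
    (p : ℕ) [Fact p.Prime] (X : SerreGraph)
    (hconn : X.toDigraph'.Connected) (α : AddVoltage X ℤ_[p]) (m₀ : ℕ)
    (hcomp : ∀ n : ℕ, m₀ ≤ n →
      (Xlevel p X α n).toDigraph'.NumComponents =
        (Xlevel p X α m₀).toDigraph'.NumComponents)
    (z : (Xlevel p X α m₀).V) :
    ∀ m : ℕ, ∀ h : m₀ ≤ m,
      ∃! S : Set (Xlevel p X α m).V,
        (∃ w, S = (Xlevel p X α m).toDigraph'.ComponentSet w) ∧
        ((levelProj p X α h).onV '' S ⊆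
          (Xlevel p X α m₀).toDigraph'.ComponentSet z) ∧
        ∃ f : SerreHom ((Xlevel p X α m).inducedClosed S)
            ((Xlevel p X α m₀).component z),
          (∀ w, (f.onV w).1 = (levelProj p X α h).onV w.1) ∧
          (∀ e, (f.onE e).1 = (levelProj p X α h).onE e.1) ∧
          IsGraphCovering f.toDigraphHom ∧
          IsSheeted f.toDigraphHom (p ^ (m - m₀)) ∧
          Nat.card ↥(SerreDeckGroup f) = p ^ (m - m₀) ∧
          Nonempty (↥(SerreDeckGroup f) ≃* Multiplicative (ZMod (p ^ (m - m₀)))) := by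
  intro m hm
  let π := (ZMod.castHom (pow_dvd_pow p hm) (ZMod (p ^ m₀))).toAddMonoidHom
  have hπ : ∀ e, (α.comp (PadicInt.toZModPow m₀) (by simp)).fn e =
      π ((α.comp (PadicInt.toZModPow m) (by simp)).fn e) :=
    fun e => (PadicInt.cast_toZModPow m₀ m hm _).symm
  have hsurj : Function.Surjective π := ZMod.castHom_surjective (pow_dvd_pow p hm)
  have hproj : levelProj p X α hm = AddVoltage.derivedMap π hπ := rfl
  have : Nonempty X.V := ⟨z.1⟩
  have hK : π.ker ≤ AddVoltage.fiberStab _ :=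
    AddVoltage.ker_le_fiberStab hπ hconn hsurj (hcomp m hm)
  have hcard : Nat.card π.ker = p ^ (m - m₀) := by
    rw [ZMod.card_ker_castHom, Nat.pow_div hm (Fact.out : p.Prime).pos]
  obtain ⟨g, hg⟩ := hsurj z.2
  obtain ⟨w, rfl⟩ : ∃ w, (levelProj p X α hm).onV w = z := ⟨(z.1, g), Prod.ext rfl hg⟩
  have hZ : Nat.card π.ker = Nat.card (ZMod (p ^ (m - m₀))) := by rw [hcard, Nat.card_zmod]
  let deck := (AddVoltage.deckEquiv hπ hK w).trans
    (addEquivOfAddCyclicCardEq hZ).toMultiplicative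
  rw [hproj]
  refine ⟨_, ⟨⟨w, rfl⟩,
    fun _ ⟨v, hv, hfv⟩ => hfv ▸ (AddVoltage.derivedMap π hπ).mapsTo_componentSet w hv,
    (AddVoltage.derivedMap π hπ).restrictComponent w, fun _ => rfl, fun _ => rfl,
    (AddVoltage.derivedMap_isLocallyBijective hπ).restrictComponent_isGraphCovering w,
    hcard ▸ AddVoltage.isSheeted_restrictComponent hπ hK w,
    (Nat.card_congr deck.toEquiv).trans (Nat.card_zmod _), ⟨deck⟩⟩, ?_⟩
  rintro _ ⟨⟨w', rfl⟩, himg, -⟩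
  exact AddVoltage.componentSet_eq_of_image_subset hπ hconn hK himg

/-- **Corollary (towers over a connected component, eventually constant number of
components).**
Let `p` be a prime, `X` a finite connected undirected graph, and `α` a `ℤₚ`-valued
voltage assignment on `X`; for `n ≥ 0` let `αₙ` be `α` reduced modulo `pⁿ` and
`Xₙ = X(ℤ/pⁿℤ, αₙ)`.  Assume there exists `m₀` such that for all `n ≥ m₀` the number
of connected components of `Xₙ` equals that of `X_{m₀}`.  Then for every connected
component `𝒢_{m₀}` of `X_{m₀}` (the component of a vertex `z`) and every `m ≥ m₀`
there exists a unique connected component `S` of `Xₘ` which projects into `𝒢_{m₀}`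
and for which the induced map of graphs is a Galois covering with Galois group
isomorphic to `ℤ/p^{m-m₀}ℤ`; in particular the graphs so obtained form a `ℤₚ`-tower
over `𝒢_{m₀}`. -/
theorem unique_component_tower_over_component
    (p : ℕ) [Fact p.Prime] (X : SerreGraph) (hV : Finite X.V) (hE : Finite X.E)
    (hconn : X.toDigraph'.Connected) (α : AddVoltage X ℤ_[p]) (m₀ : ℕ)
    (hcomp : ∀ n : ℕ, m₀ ≤ n →
      (Xlevel p X α n).toDigraph'.NumComponents =
        (Xlevel p X α m₀).toDigraph'.NumComponents)
    (z : (Xlevel p X α m₀).V) :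
    ∀ m : ℕ, ∀ h : m₀ ≤ m,
      ∃! S : Set (Xlevel p X α m).V,
        (∃ w, S = (Xlevel p X α m).toDigraph'.ComponentSet w) ∧
        ((levelProj p X α h).onV '' S ⊆
          (Xlevel p X α m₀).toDigraph'.ComponentSet z) ∧
        ∃ f : SerreHom ((Xlevel p X α m).inducedClosed S)
            ((Xlevel p X α m₀).component z),
          (∀ w, (f.onV w).1 = (levelProj p X α h).onV w.1) ∧
          (∀ e, (f.onE e).1 = (levelProj p X α h).onE e.1) ∧
          IsGraphCovering f.toDigraphHom ∧
          IsSheeted f.toDigraphHom (p ^ (m - m₀)) ∧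
          Nat.card ↥(SerreDeckGroup f) = p ^ (m - m₀) ∧
          Nonempty (↥(SerreDeckGroup f) ≃* Multiplicative (ZMod (p ^ (m - m₀)))) :=
  unique_component_tower_over_component_general p X hconn α m₀ hcomp z
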